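/- arXiv:2503.03916 — 4 statements merged into one kernel-verified Lean document; each statement's English description precedes it below -/
import Mathlib

section
/- Given a chain of adjunctions L ⊣ f ⊣ R between categories, the functor L is fully faithful if and only if the functor R is fully faithful. -/
open CategoryTheory

theorem CategoryTheory.Functor.full_and_faithful_iff_nonempty_fullyFaithful
    {C : Type*} [Category C] {D : Type*} [Category D] (F : C ⥤ D) :
    F.Full ∧ F.Faithful ↔ Nonempty F.FullyFaithful :=
  ⟨fun ⟨_, _⟩ => ⟨.ofFullyFaithful F⟩, fun ⟨hF⟩ => ⟨hF.full, hF.faithful⟩⟩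

/-- Given a chain of adjunctions `L ⊣ f ⊣ R`, the functor `L` is fully faithful if and
only if the functor `R` is fully faithful. -/
theorem stmt_1 {C : Type*} [Category C] {D : Type*} [Category D]
    (f : C ⥤ D) (L : D ⥤ C) (R : D ⥤ C) (adjL : L ⊣ f) (adjR : f ⊣ R) :
    (L.Full ∧ L.Faithful) ↔ (R.Full ∧ R.Faithful) := by
  rw [L.full_and_faithful_iff_nonempty_fullyFaithful,
    R.full_and_faithful_iff_nonempty_fullyFaithful]
  exact (Adjunction.Triple.mk adjL adjR).fullyFaithfulEquiv.nonempty_congr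
end

section
/- A functor f : C → D between small categories is fully faithful if and only if the left Kan extension functor f_! : PSh(C) → PSh(D) on presheaf categories is fully faithful. -/
/-!
If `f` is fully faithful, the unit `P ⟶ f^* f_! P` of `f_! ⊣ f^*` is an isomorphism (a pointwise
Kan extension along a fully faithful functor restricts back to what it extends), so the left
adjoint `f_!` is fully faithful. Conversely `f_!` sends representables to representables,
`f_! ∘ y ≅ y ∘ f`, so if `f_!` is fully faithful then so is `y ∘ f`, hence `f`.
-/

open CategoryTheory

namespace CategoryTheory.Functor

universe w v₁ v₂ v₃ u₁ u₂ u₃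

variable {C : Type u₁} [Category.{v₁} C] {D : Type u₂} [Category.{v₂} D]

noncomputable def fullyFaithfulLan {H : Type u₃} [Category.{v₃} H] (L : C ⥤ D)
    [L.Full] [L.Faithful] [∀ F : C ⥤ H, L.HasPointwiseLeftKanExtension F] :
    (L.lan : (C ⥤ H) ⥤ (D ⥤ H)).FullyFaithful :=
  (L.lanAdjunction H).fullyFaithfulLOfIsIsoUnit

noncomputable def FullyFaithful.ofOpLan (f : C ⥤ D)
    [∀ P : Cᵒᵖ ⥤ Type max w v₁ v₂, f.op.HasLeftKanExtension P]
    (h : (f.op.lan : (Cᵒᵖ ⥤ Type max w v₁ v₂) ⥤ (Dᵒᵖ ⥤ Type max w v₁ v₂)).FullyFaithful) :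
    f.FullyFaithful :=
  (((ULiftYoneda.fullyFaithful.{max w v₂} C).comp h).ofIso
    (Presheaf.compULiftYonedaIsoULiftYonedaCompLan.{w} f).symm).ofCompFaithful

end CategoryTheory.Functor

/-- A functor `f : C ⥤ D` between small categories is fully faithful if and only if the
left Kan extension functor `f_! : PSh(C) ⥤ PSh(D)` on presheaf categories is fully
faithful. -/
theorem stmt_3 {C : Type u} [SmallCategory C] {D : Type u} [SmallCategory D]
    (f : C ⥤ D) :
    (f.Full ∧ f.Faithful) ↔
      ((f.op.lan : (Cᵒᵖ ⥤ Type u) ⥤ (Dᵒᵖ ⥤ Type u)).Full ∧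
        (f.op.lan : (Cᵒᵖ ⥤ Type u) ⥤ (Dᵒᵖ ⥤ Type u)).Faithful) := by
  constructor
  · rintro ⟨_, _⟩
    exact ⟨f.op.fullyFaithfulLan.full, f.op.fullyFaithfulLan.faithful⟩
  · rintro ⟨_, _⟩
    have hf := Functor.FullyFaithful.ofOpLan.{u} f (.ofFullyFaithful _)
    exact ⟨hf.full, hf.faithful⟩
end

section
/- Consider a commutative pullback square of categories with top map p̄* : W → Y, left map q̄* : W → X, right map q* : Y → Z, and bottom map p* : X → Z. If p* admits a fully faithful left adjoint p_!, then p̄* admits a fully faithful left adjoint p̄_!, which can be defined on objects by p̄_!(y) = (p_! q*(y), y). -/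
open CategoryTheory

universe v₁ v₂ v₃ u₁ u₂ u₃

variable {X : Type u₁} [Category.{v₁} X] {Y : Type u₂} [Category.{v₂} Y]
  {Z : Type u₃} [Category.{v₃} Z]

/-- The (pseudo-)pullback `X ×_Z Y` of two functors `pStar : X ⥤ Z` and `qStar : Y ⥤ Z`:
objects are triples `(x, y, e)` where `e : pStar x ≅ qStar y`. -/
structure CatPullback (pStar : X ⥤ Z) (qStar : Y ⥤ Z) where
  x : X
  y : Y
  e : pStar.obj x ≅ qStar.obj y

namespace CatPullback

variable {pStar : X ⥤ Z} {qStar : Y ⥤ Z}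

/-- Morphisms in the pullback of categories. -/
@[ext]
structure Hom (W₁ W₂ : CatPullback pStar qStar) where
  hx : W₁.x ⟶ W₂.x
  hy : W₁.y ⟶ W₂.y
  w : pStar.map hx ≫ W₂.e.hom = W₁.e.hom ≫ qStar.map hy := by aesop_cat

instance : Category (CatPullback pStar qStar) where
  Hom := Hom
  id W := { hx := 𝟙 W.x, hy := 𝟙 W.y }
  comp u v :=
    { hx := u.hx ≫ v.hx
      hy := u.hy ≫ v.hy
      w := by simp only [Functor.map_comp, Category.assoc, v.w, reassoc_of% u.w] }

/-- The projection `X ×_Z Y ⥤ Y`. -/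
@[simps]
def pbarStar (pStar : X ⥤ Z) (qStar : Y ⥤ Z) : CatPullback pStar qStar ⥤ Y where
  obj W := W.y
  map u := u.hy

/-- The projection `X ×_Z Y ⥤ X`. -/
@[simps]
def qbarStar (pStar : X ⥤ Z) (qStar : Y ⥤ Z) : CatPullback pStar qStar ⥤ X where
  obj W := W.x
  map u := u.hx

end CatPullback

/-!
Glue `(p_! q* y, y)` along `η⁻¹`, where `η : q* y ≅ p* p_! q* y` is the invertible unit. A map
`(p_! q* y, y) ⟶ (x, y', e)` in `X ×_Z Y` is a pair `(f, g)` whose compatibility condition says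
exactly that `f` is the transpose of `q* g ≫ e⁻¹`; so it is determined by the arbitrary `g`.
Hence `y ↦ (p_! q* y, y)` is left adjoint to the projection with identity unit, and so it is
fully faithful.
-/

namespace CatPullback

variable {pStar : X ⥤ Z} (qStar : Y ⥤ Z) {pShriek : Z ⥤ X} (adj : pShriek ⊣ pStar)
  [IsIso adj.unit]

noncomputable def pbarShriekObj (y : Y) : CatPullback pStar qStar :=
  ⟨pShriek.obj (qStar.obj y), y, (asIso (adj.unit.app (qStar.obj y))).symm⟩

variable {qStar adj} in
lemma pbarShriekObj_hom_w_iff {y : Y} {W : CatPullback pStar qStar}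
    (f : pShriek.obj (qStar.obj y) ⟶ W.x) (g : y ⟶ W.y) :
    pStar.map f ≫ W.e.hom = (pbarShriekObj qStar adj y).e.hom ≫ qStar.map g ↔
      adj.homEquiv _ _ f = qStar.map g ≫ W.e.inv := by
  rw [Adjunction.homEquiv_unit, Iso.eq_comp_inv, Category.assoc]
  exact Iso.eq_inv_comp (asIso (adj.unit.app (qStar.obj y)))

noncomputable def pbarShriekHomEquiv (y : Y) (W : CatPullback pStar qStar) :
    (pbarShriekObj qStar adj y ⟶ W) ≃ (y ⟶ (pbarStar pStar qStar).obj W) where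
  toFun u := u.hy
  invFun g :=
    { hx := (adj.homEquiv _ _).symm (qStar.map g ≫ W.e.inv)
      hy := g
      w := (pbarShriekObj_hom_w_iff _ _).2 (Equiv.apply_symm_apply _ _) }
  left_inv u := Hom.ext ((Equiv.symm_apply_eq _).2 ((pbarShriekObj_hom_w_iff _ _).1 u.w).symm) rfl
  right_inv _ := rfl

noncomputable def pbarShriek : Y ⥤ CatPullback pStar qStar :=
  Adjunction.leftAdjointOfEquiv (pbarShriekHomEquiv qStar adj) fun _ _ _ _ _ => rfl

noncomputable def pbarAdjunction : pbarShriek qStar adj ⊣ pbarStar pStar qStar :=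
  Adjunction.adjunctionOfEquivLeft _ _

lemma pbarAdjunction_unit_app (y : Y) : (pbarAdjunction qStar adj).unit.app y = 𝟙 y := rfl

instance : IsIso (pbarAdjunction qStar adj).unit :=
  have (y : Y) : IsIso ((pbarAdjunction qStar adj).unit.app y) := by
    rw [pbarAdjunction_unit_app]; exact IsIso.id y
  NatIso.isIso_of_isIso_app _

end CatPullback

/-- Given a pullback square of categories with bottom functor `pStar : X ⥤ Z` and right
functor `qStar : Y ⥤ Z` (so that the pullback is `W = X ×_Z Y` with top projection
`p̄* : W ⥤ Y`), if `pStar` admits a fully faithful left adjoint `p_!`, then the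
projection `p̄* : W ⥤ Y` admits a fully faithful left adjoint `p̄_!`, which can be
defined on objects by `p̄_!(y) = (p_! (q* y), y)`. -/
theorem stmt_8 (pStar : X ⥤ Z) (qStar : Y ⥤ Z) (pShriek : Z ⥤ X)
    (adj : pShriek ⊣ pStar) (hff : pShriek.Full ∧ pShriek.Faithful) :
    ∃ pbarShriek : Y ⥤ CatPullback pStar qStar,
      Nonempty (pbarShriek ⊣ CatPullback.pbarStar pStar qStar) ∧
      pbarShriek.Full ∧ pbarShriek.Faithful ∧
      ∀ y : Y, (pbarShriek.obj y).x = pShriek.obj (qStar.obj y) ∧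
        (pbarShriek.obj y).y = y := by
  obtain ⟨_, _⟩ := hff
  let pbarAdj := CatPullback.pbarAdjunction qStar adj
  have ff := pbarAdj.fullyFaithfulLOfIsIsoUnit
  exact ⟨_, ⟨pbarAdj⟩, ff.full, ff.faithful, fun _ => ⟨rfl, rfl⟩⟩
end

section
/- In a commutative square of categories where the horizontal functors p* : X → Z and p̄* : W → Y admit fully faithful left adjoints p_! and p̄_!, if the composite q̄* ∘ p̄_! factors through the essential image of p_!, then the Beck–Chevalley transformation p_! q* → q̄* p̄_! is an isomorphism. -/
open CategoryTheory

universe v₁ v₂ v₃ v₄ u₁ u₂ u₃ u₄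

variable {W : Type u₁} [Category.{v₁} W] {X : Type u₂} [Category.{v₂} X]
  {Y : Type u₃} [Category.{v₃} Y] {Z : Type u₄} [Category.{v₄} Z]

/-- The Beck–Chevalley (exchange) transformation `p_! q* ⟶ q̄* p̄_!` associated with a
commutative square `p̄* ⋙ q* ≅ q̄* ⋙ p*` (functors `p̄* : W ⥤ Y`, `q̄* : W ⥤ X`,
`q* : Y ⥤ Z`, `p* : X ⥤ Z`) and adjunctions `p_! ⊣ p*` and `p̄_! ⊣ p̄*`.  It is the
composite
`p_! q* → p_! q* p̄* p̄_! ≅ p_! p* q̄* p̄_! → q̄* p̄_!`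
using the unit of `p̄_! ⊣ p̄*`, the square, and the counit of `p_! ⊣ p*`. -/
def beckChevalley (pbarStar : W ⥤ Y) (qbarStar : W ⥤ X) (qStar : Y ⥤ Z) (pStar : X ⥤ Z)
    (sq : pbarStar ⋙ qStar ≅ qbarStar ⋙ pStar)
    (pShriek : Z ⥤ X) (adjp : pShriek ⊣ pStar)
    (pbarShriek : Y ⥤ W) (adjpbar : pbarShriek ⊣ pbarStar) :
    qStar ⋙ pShriek ⟶ pbarShriek ⋙ qbarStar where
  app y :=
    pShriek.map (qStar.map (adjpbar.unit.app y) ≫ sq.hom.app (pbarShriek.obj y)) ≫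
      adjp.counit.app (qbarStar.obj (pbarShriek.obj y))
  naturality y y' g := by
    have h1 := sq.hom.naturality (pbarShriek.map g)
    have h2 := adjpbar.unit.naturality g
    have h3 := adjp.counit.naturality (qbarStar.map (pbarShriek.map g))
    dsimp at h1 h2 h3 ⊢
    have key : qStar.map g ≫ qStar.map (adjpbar.unit.app y') ≫ sq.hom.app (pbarShriek.obj y') =
        (qStar.map (adjpbar.unit.app y) ≫ sq.hom.app (pbarShriek.obj y)) ≫
          pStar.map (qbarStar.map (pbarShriek.map g)) := by
      rw [← Category.assoc, ← qStar.map_comp, h2, qStar.map_comp, Category.assoc, h1,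
        Category.assoc]
    rw [← pShriek.map_comp_assoc, key, pShriek.map_comp, Category.assoc, h3]
    simp

/-- In a commutative square of categories where the functors `p* : X ⥤ Z` and
`p̄* : W ⥤ Y` admit fully faithful left adjoints `p_!` and `p̄_!`, if the composite
`q̄* ∘ p̄_!` lands in the essential image of `p_!`, then the Beck–Chevalley
transformation `p_! q* ⟶ q̄* p̄_!` is an isomorphism. -/
theorem stmt_9 (pbarStar : W ⥤ Y) (qbarStar : W ⥤ X) (qStar : Y ⥤ Z) (pStar : X ⥤ Z)
    (sq : pbarStar ⋙ qStar ≅ qbarStar ⋙ pStar)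
    (pShriek : Z ⥤ X) (adjp : pShriek ⊣ pStar)
    (pbarShriek : Y ⥤ W) (adjpbar : pbarShriek ⊣ pbarStar)
    (hp : pShriek.Full ∧ pShriek.Faithful)
    (hpbar : pbarShriek.Full ∧ pbarShriek.Faithful)
    (himg : ∀ y : Y, pShriek.essImage (qbarStar.obj (pbarShriek.obj y))) :
    IsIso (beckChevalley pbarStar qbarStar qStar pStar sq pShriek adjp pbarShriek adjpbar) := by
  obtain ⟨hpf, hpff⟩ := hp
  obtain ⟨hpbf, hpbff⟩ := hpbar
  have : ∀ y : Y, IsIso ((beckChevalley pbarStar qbarStar qStar pStar sq pShriek adjp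
      pbarShriek adjpbar).app y) := by
    intro y
    obtain ⟨z, ⟨e⟩⟩ := himg y
    have hc : IsIso (adjp.counit.app (qbarStar.obj (pbarShriek.obj y))) := by
      have hnat := adjp.counit.naturality e.hom
      have h1 : IsIso (adjp.counit.app (pShriek.obj z)) := inferInstance
      have : adjp.counit.app (qbarStar.obj (pbarShriek.obj y)) =
          inv (pShriek.map (pStar.map e.hom)) ≫ adjp.counit.app (pShriek.obj z) ≫ e.hom := by
        rw [IsIso.eq_inv_comp]
        exact hnat
      rw [this]
      infer_instance
    have hu : IsIso (adjpbar.unit.app y) := inferInstance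
    dsimp [beckChevalley]
    infer_instance
  exact NatIso.isIso_of_isIso_app _
end
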